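/- Let 𝔤 be a finite-dimensional Lie algebra over a field k of characteristic zero and let r = Σᵢ aᵢ ⊗ bᵢ ∈ 𝔤 ⊗ 𝔤 satisfy the classical Yang–Baxter equation [r₁₂, r₁₃] + [r₁₂, r₂₃] + [r₁₃, r₂₃] = 0 in 𝔤 ⊗ 𝔤 ⊗ 𝔤 and have ad-invariant symmetric part, i.e. (ad_X ⊗ id + id ⊗ ad_X)(r + P(r)) = 0 for all X ∈ 𝔤. Define r₊(ξ) = Σᵢ ξ(aᵢ) bᵢ, r₋(ξ) = −Σᵢ ξ(bᵢ) aᵢ, and the bracket [ξ, η]* = ad*_{r₊(ξ)} η − ad*_{r₋(η)} ξ on 𝔤*, where (ad*_X ξ)(Y) = −ξ([X, Y]). Then [·,·]* is a Lie bracket on 𝔤*: it is bilinear, antisymmetric ([ξ, η]* = −[η, ξ]* for all ξ, η), and satisfies the Jacobi identity [ξ, [η, ζ]*]* + [η, [ζ, ξ]*]* + [ζ, [ξ, η]*]* = 0 for all ξ, η, ζ ∈ 𝔤*. -/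

import Mathlib

/-!
Pairing the two hypotheses on `r` with elements of `𝔤*` turns them into statements about
`r₊, r₋ : 𝔤* → 𝔤`: the classical Yang–Baxter equation says that `r₊ [ξ, η]* = [r₊ ξ, r₊ η]`,
and invariance of the symmetric part says that `s = r₊ − r₋` is a symmetric `𝔤`-equivariant
map. Symmetry and equivariance of `s` give antisymmetry of `[·,·]*`, hence
`2 [ξ, η]* = ad*_{R ξ} η − ad*_{R η} ξ =: [ξ, η]_R` with `R = r₊ + r₋`. The Jacobiator of
`[·,·]_R` is `Σ_cyc ad*_{[R ξ, R η] − R [ξ, η]_R} ζ`, and `R` satisfies the modified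
Yang–Baxter equation `[R ξ, R η] − R [ξ, η]_R = −[s ξ, s η]`. The remaining sum
`Σ_cyc ad*_{[s ξ, s η]} ζ` vanishes because `(ξ, η, ζ) ↦ ζ [s ξ, s η]` is an alternating
`𝔤`-invariant form. Dividing by `4` is where the characteristic enters.
-/

open TensorProduct

/-- `r₊(ξ) = ⟨r, ξ ⊗ id⟩ = Σᵢ ξ(aᵢ) • bᵢ` for `r = Σᵢ aᵢ ⊗ bᵢ`. -/
noncomputable def rPlus {k L : Type*} [Field k] [LieRing L] [LieAlgebra k L]
    {m : ℕ} (a b : Fin m → L) (ξ : Module.Dual k L) : L :=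
  ∑ i, ξ (a i) • b i

/-- `r₋(ξ) = −⟨r, id ⊗ ξ⟩ = −Σᵢ ξ(bᵢ) • aᵢ` for `r = Σᵢ aᵢ ⊗ bᵢ`. -/
noncomputable def rMinus {k L : Type*} [Field k] [LieRing L] [LieAlgebra k L]
    {m : ℕ} (a b : Fin m → L) (ξ : Module.Dual k L) : L :=
  -∑ i, ξ (b i) • a i

/-- The coadjoint action: `(ad*_X ξ)(Y) = −ξ([X, Y])`. -/
noncomputable def coad {k L : Type*} [Field k] [LieRing L] [LieAlgebra k L]
    (X : L) (ξ : Module.Dual k L) : Module.Dual k L :=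
  -(ξ ∘ₗ LieAlgebra.ad k L X)

/-- The induced bracket on `𝔤*`: `[ξ, η]* = ad*_{r₊(ξ)} η − ad*_{r₋(η)} ξ`. -/
noncomputable def dualBracket {k L : Type*} [Field k] [LieRing L] [LieAlgebra k L]
    {m : ℕ} (a b : Fin m → L) (ξ η : Module.Dual k L) : Module.Dual k L :=
  coad (rPlus a b ξ) η - coad (rMinus a b η) ξ

section RBracket

variable {L M : Type*} [LieRing L] [AddCommGroup M] [LieRingModule L M]

def rBracket (A B : M → L) (ξ η : M) : M :=
  ⁅A ξ, η⁆ - ⁅B η, ξ⁆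

theorem rBracket_jacobi_eq (A : M → L) (ξ η ζ : M) :
    rBracket A A ξ (rBracket A A η ζ) + rBracket A A η (rBracket A A ζ ξ)
        + rBracket A A ζ (rBracket A A ξ η)
      = ⁅⁅A ξ, A η⁆ - A (rBracket A A ξ η), ζ⁆ + ⁅⁅A η, A ζ⁆ - A (rBracket A A η ζ), ξ⁆
        + ⁅⁅A ζ, A ξ⁆ - A (rBracket A A ζ ξ), η⁆ := by
  simp only [rBracket, lie_sub, sub_lie, lie_lie]
  abel

theorem rBracket_add_add_eq_two_nsmul (A B : M → L)
    (h : ∀ ξ η, rBracket A B ξ η = -rBracket A B η ξ) (ξ η : M) :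
    rBracket (A + B) (A + B) ξ η = 2 • rBracket A B ξ η := by
  have := h ξ η
  simp only [rBracket, Pi.add_apply, add_lie] at this ⊢
  rw [two_nsmul]
  nth_rewrite 2 [this]
  abel

variable {R : Type*} [CommRing R] [LieAlgebra R L] [Module R M]

theorem rBracket_add_left (A B : M →ₗ[R] L) (ξ ξ' η : M) :
    rBracket A B (ξ + ξ') η = rBracket A B ξ η + rBracket A B ξ' η := by
  simp only [rBracket, map_add, add_lie, lie_add]
  abel

theorem rBracket_add_right (A B : M →ₗ[R] L) (ξ η η' : M) :
    rBracket A B ξ (η + η') = rBracket A B ξ η + rBracket A B ξ η' := by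
  simp only [rBracket, map_add, add_lie, lie_add]
  abel

variable [LieModule R L M]

theorem rBracket_smul_left (A B : M →ₗ[R] L) (c : R) (ξ η : M) :
    rBracket A B (c • ξ) η = c • rBracket A B ξ η := by
  simp only [rBracket, map_smul, smul_lie, lie_smul, smul_sub]

theorem rBracket_smul_right (A B : M →ₗ[R] L) (c : R) (ξ η : M) :
    rBracket A B ξ (c • η) = c • rBracket A B ξ η := by
  simp only [rBracket, map_smul, smul_lie, lie_smul, smul_sub]

end RBracket

section InvariantSymmetric

variable {k L : Type*} [Field k] [LieRing L] [LieAlgebra k L]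

structure IsInvariantSymmetric (s : Module.Dual k L → L) : Prop where
  symm : ∀ ξ η : Module.Dual k L, ξ (s η) = η (s ξ)
  lie_apply : ∀ (X : L) (ξ : Module.Dual k L), ⁅X, s ξ⁆ = s ⁅X, ξ⁆

namespace IsInvariantSymmetric

variable {s : Module.Dual k L → L} (hs : IsInvariantSymmetric s)
include hs

theorem apply_lie_eq_neg_apply_lie (X : L) (η ζ : Module.Dual k L) :
    ζ ⁅X, s η⁆ = -η ⁅X, s ζ⁆ := by
  rw [hs.lie_apply, hs.symm, Module.Dual.lie_apply]

theorem lie_add_lie_eq_zero (ξ η : Module.Dual k L) : ⁅s ξ, η⁆ + ⁅s η, ξ⁆ = 0 := by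
  ext Z
  simp only [LinearMap.add_apply, Module.Dual.lie_apply, LinearMap.zero_apply]
  rw [← lie_skew (s ξ) Z, ← lie_skew (s η) Z, map_neg, map_neg,
    hs.apply_lie_eq_neg_apply_lie Z ξ η]
  ring

theorem apply_lie_cyclic (ξ η ζ : Module.Dual k L) :
    ζ ⁅s ξ, s η⁆ = ξ ⁅s η, s ζ⁆ := by
  rw [hs.apply_lie_eq_neg_apply_lie, ← lie_skew, map_neg, neg_neg,
    hs.apply_lie_eq_neg_apply_lie, ← lie_skew, map_neg, neg_neg]

theorem lie_lie_cyclic_eq_zero (ξ η ζ : Module.Dual k L) :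
    ⁅⁅s ξ, s η⁆, ζ⁆ + ⁅⁅s η, s ζ⁆, ξ⁆ + ⁅⁅s ζ, s ξ⁆, η⁆ = 0 := by
  ext Z
  have h : ∀ ξ η ζ : Module.Dual k L,
      ⁅⁅s ξ, s η⁆, ζ⁆ Z = ζ ⁅s ⁅Z, ξ⁆, s η⁆ + ζ ⁅s ξ, s ⁅Z, η⁆⁆ := by
    intro ξ η ζ
    rw [Module.Dual.lie_apply, ← lie_skew, map_neg, neg_neg, ← hs.lie_apply, ← hs.lie_apply,
      leibniz_lie, map_add, add_comm]
  have h' : ∀ ξ η ζ : Module.Dual k L, ⁅⁅s ξ, s η⁆, ζ⁆ Z = -⁅Z, ζ⁆ ⁅s ξ, s η⁆ := by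
    intro ξ η ζ
    rw [Module.Dual.lie_apply, Module.Dual.lie_apply, ← lie_skew, map_neg, neg_neg]
  simp only [LinearMap.add_apply, LinearMap.zero_apply]
  rw [h ξ η ζ, h' η ζ ξ, h' ζ ξ η, ← hs.apply_lie_cyclic ⁅Z, ξ⁆ η ζ,
    hs.apply_lie_cyclic ξ ⁅Z, η⁆ ζ, hs.apply_lie_cyclic ⁅Z, η⁆ ζ ξ]
  ring

end IsInvariantSymmetric

variable {A B : Module.Dual k L →ₗ[k] L} (hs : IsInvariantSymmetric ⇑(A - B))
include hs

theorem IsInvariantSymmetric.rBracket_antisymm (ξ η : Module.Dual k L) :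
    rBracket A B ξ η = -rBracket A B η ξ := by
  rw [eq_neg_iff_add_eq_zero, ← hs.lie_add_lie_eq_zero ξ η]
  simp only [rBracket, LinearMap.sub_apply, sub_lie]
  abel

/-- The modified classical Yang–Baxter equation for `A + B`. -/
theorem IsInvariantSymmetric.map_rBracket_add_add
    (hA : ∀ ξ η, A (rBracket A B ξ η) = ⁅A ξ, A η⁆) (ξ η : Module.Dual k L) :
    (A + B) (rBracket ⇑(A + B) ⇑(A + B) ξ η)
      = ⁅(A + B) ξ, (A + B) η⁆ + ⁅(A - B) ξ, (A - B) η⁆ := by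
  have hanti := hs.rBracket_antisymm
  obtain ⟨s, rfl⟩ : ∃ s, B = A - s := ⟨A - B, (sub_sub_cancel A B).symm⟩
  rw [sub_sub_cancel] at hs ⊢
  rw [show ⇑(A + (A - s)) = ⇑A + ⇑(A - s) from rfl, rBracket_add_add_eq_two_nsmul _ _ hanti,
    Pi.add_apply, map_nsmul, map_nsmul, hA, LinearMap.sub_apply, hA, rBracket, map_sub,
    ← hs.lie_apply, ← hs.lie_apply]
  simp only [Pi.add_apply, LinearMap.sub_apply, lie_add, add_lie, lie_sub, sub_lie]
  rw [← lie_skew (s ξ) (A η), ← lie_skew (s ξ) (s η)]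
  abel

theorem IsInvariantSymmetric.rBracket_jacobi [NeZero (2 : k)]
    (hA : ∀ ξ η, A (rBracket A B ξ η) = ⁅A ξ, A η⁆) (ξ η ζ : Module.Dual k L) :
    rBracket A B ξ (rBracket A B η ζ) + rBracket A B η (rBracket A B ζ ξ)
      + rBracket A B ζ (rBracket A B ξ η) = 0 := by
  have hdouble : ∀ ξ η, rBracket ⇑(A + B) ⇑(A + B) ξ η = (2 : k) • rBracket A B ξ η := by
    intro ξ η
    rw [two_smul, ← two_nsmul]
    exact rBracket_add_add_eq_two_nsmul _ _ hs.rBracket_antisymm ξ η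
  have hdefect : ∀ ξ η, ⁅(A + B) ξ, (A + B) η⁆ - (A + B) (rBracket ⇑(A + B) ⇑(A + B) ξ η)
      = -⁅(A - B) ξ, (A - B) η⁆ := by
    intro ξ η
    rw [hs.map_rBracket_add_add hA]
    abel
  have h := rBracket_jacobi_eq (⇑(A + B)) ξ η ζ
  rw [hdefect, hdefect, hdefect] at h
  simp only [neg_lie, hdouble, rBracket_smul_right, ← smul_add] at h
  rw [← neg_add, ← neg_add, hs.lie_lie_cyclic_eq_zero, neg_zero] at h
  exact (smul_eq_zero.mp ((smul_eq_zero.mp h).resolve_left two_ne_zero)).resolve_left two_ne_zero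

end InvariantSymmetric

section RMatrix

variable {k L : Type*} [Field k] [LieRing L] [LieAlgebra k L] {m : ℕ} (a b : Fin m → L)

variable (k)

def IsCYBESolution : Prop :=
  ∑ i, ∑ j,
      (⁅a i, a j⁆ ⊗ₜ[k] (b i ⊗ₜ[k] b j)
        + a i ⊗ₜ[k] (⁅b i, a j⁆ ⊗ₜ[k] b j)
        + a i ⊗ₜ[k] (a j ⊗ₜ[k] ⁅b i, b j⁆))
    = (0 : L ⊗[k] (L ⊗[k] L))

def HasInvariantSymmetricPart : Prop :=
  ∀ X : L, ∑ i,
      (⁅X, a i⁆ ⊗ₜ[k] b i + a i ⊗ₜ[k] ⁅X, b i⁆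
        + ⁅X, b i⁆ ⊗ₜ[k] a i + b i ⊗ₜ[k] ⁅X, a i⁆)
    = (0 : L ⊗[k] L)

noncomputable def rPlusₗ : Module.Dual k L →ₗ[k] L where
  toFun := rPlus a b
  map_add' ξ η := by simp only [rPlus, LinearMap.add_apply, add_smul, Finset.sum_add_distrib]
  map_smul' c ξ := by
    simp only [rPlus, LinearMap.smul_apply, smul_eq_mul, mul_smul, Finset.smul_sum,
      RingHom.id_apply]

noncomputable def rMinusₗ : Module.Dual k L →ₗ[k] L where
  toFun := rMinus a b
  map_add' ξ η := by
    simp only [rMinus, LinearMap.add_apply, add_smul, Finset.sum_add_distrib, neg_add]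
  map_smul' c ξ := by
    simp only [rMinus, LinearMap.smul_apply, smul_eq_mul, mul_smul, Finset.smul_sum,
      RingHom.id_apply, smul_neg]

variable {k}

theorem coad_eq_lie (X : L) (ξ : Module.Dual k L) : coad X ξ = ⁅X, ξ⁆ := rfl

theorem dualBracket_eq_rBracket :
    dualBracket (k := k) a b = rBracket (rPlusₗ k a b) (rMinusₗ k a b) :=
  rfl

theorem apply_rMinus (ξ η : Module.Dual k L) : ξ (rMinus a b η) = -η (rPlus a b ξ) := by
  simp only [rMinus, rPlus, map_neg, map_sum, map_smul, smul_eq_mul, mul_comm]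

variable {a b}

theorem IsCYBESolution.pairing_eq_zero (hr : IsCYBESolution k a b) (f g h : Module.Dual k L) :
    f ⁅rMinus a b g, rMinus a b h⁆ - g ⁅rPlus a b f, rMinus a b h⁆
      + h ⁅rPlus a b f, rPlus a b g⁆ = 0 := by
  have := congrArg (TensorProduct.lift ((LinearMap.mul k k).compl₁₂ f
      (TensorProduct.lift ((LinearMap.mul k k).compl₁₂ g h)))) hr
  simp only [map_sum, map_add, map_zero, TensorProduct.lift.tmul, LinearMap.compl₁₂_apply,
    LinearMap.mul_apply'] at this
  rw [Finset.sum_comm] at this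
  simp only [rMinus, rPlus, lie_neg, neg_lie, lie_sum, sum_lie, lie_smul, smul_lie, smul_neg,
    Finset.sum_neg_distrib, neg_neg, map_neg, map_sum, map_smul, smul_eq_mul, Finset.mul_sum,
    sub_neg_eq_add, ← Finset.sum_add_distrib]
  rw [← this]
  exact Finset.sum_congr rfl fun j _ ↦ Finset.sum_congr rfl fun i _ ↦ by ring

theorem IsCYBESolution.rPlus_dualBracket (hr : IsCYBESolution k a b) (ξ η : Module.Dual k L) :
    rPlus a b (dualBracket a b ξ η) = ⁅rPlus a b ξ, rPlus a b η⁆ := by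
  rw [← sub_eq_zero, ← Module.forall_dual_apply_eq_zero_iff k]
  intro h
  rw [map_sub, ← neg_neg (h (rPlus a b _)), ← apply_rMinus, dualBracket, coad_eq_lie,
    coad_eq_lie, LinearMap.sub_apply, Module.Dual.lie_apply, Module.Dual.lie_apply]
  linear_combination -hr.pairing_eq_zero ξ η h

theorem HasInvariantSymmetricPart.pairing_eq_zero (hr : HasInvariantSymmetricPart k a b) (X : L)
    (f g : Module.Dual k L) :
    g ⁅X, rPlus a b f - rMinus a b f⁆ + f ⁅X, rPlus a b g - rMinus a b g⁆ = 0 := by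
  have := congrArg (TensorProduct.lift ((LinearMap.mul k k).compl₁₂ f g)) (hr X)
  simp only [map_sum, map_add, map_zero, TensorProduct.lift.tmul, LinearMap.compl₁₂_apply,
    LinearMap.mul_apply', Finset.sum_add_distrib] at this
  simp only [rPlus, rMinus, sub_neg_eq_add, lie_add, lie_sum, lie_smul, map_add, map_sum,
    map_smul, smul_eq_mul]
  rw [← this]
  simp only [mul_comm (g _) (f _)]
  ring

theorem HasInvariantSymmetricPart.isInvariantSymmetric (hr : HasInvariantSymmetricPart k a b) :
    IsInvariantSymmetric ⇑(rPlusₗ k a b - rMinusₗ k a b) := by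
  have hsymm : ∀ ξ η : Module.Dual k L,
      ξ ((rPlusₗ k a b - rMinusₗ k a b) η) = η ((rPlusₗ k a b - rMinusₗ k a b) ξ) := by
    intro ξ η
    change ξ (rPlus a b η - rMinus a b η) = η (rPlus a b ξ - rMinus a b ξ)
    rw [map_sub, map_sub, apply_rMinus, apply_rMinus]
    ring
  refine ⟨hsymm, fun X ξ ↦ ?_⟩
  rw [← sub_eq_zero, ← Module.forall_dual_apply_eq_zero_iff k]
  intro g
  rw [map_sub, hsymm, Module.Dual.lie_apply, sub_neg_eq_add]
  exact hr.pairing_eq_zero X ξ g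

end RMatrix

theorem dualBracket_lie_general {k L : Type*} [Field k] [CharZero k]
    [LieRing L] [LieAlgebra k L]
    {m : ℕ} (a b : Fin m → L)
    (hCYBE : ∑ i, ∑ j,
        (⁅a i, a j⁆ ⊗ₜ[k] (b i ⊗ₜ[k] b j)
          + a i ⊗ₜ[k] (⁅b i, a j⁆ ⊗ₜ[k] b j)
          + a i ⊗ₜ[k] (a j ⊗ₜ[k] ⁅b i, b j⁆))
      = (0 : L ⊗[k] (L ⊗[k] L)))
    (hsym : ∀ X : L, ∑ i,
        (⁅X, a i⁆ ⊗ₜ[k] b i + a i ⊗ₜ[k] ⁅X, b i⁆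
          + ⁅X, b i⁆ ⊗ₜ[k] a i + b i ⊗ₜ[k] ⁅X, a i⁆)
      = (0 : L ⊗[k] L)) :
    (∀ (c : k) (ξ ξ' η : Module.Dual k L),
      dualBracket a b (c • ξ + ξ') η
        = c • dualBracket a b ξ η + dualBracket a b ξ' η) ∧
    (∀ (c : k) (ξ η η' : Module.Dual k L),
      dualBracket a b ξ (c • η + η')
        = c • dualBracket a b ξ η + dualBracket a b ξ η') ∧
    (∀ ξ η : Module.Dual k L, dualBracket a b ξ η = -dualBracket a b η ξ) ∧
    (∀ ξ η ζ : Module.Dual k L,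
      dualBracket a b ξ (dualBracket a b η ζ)
        + dualBracket a b η (dualBracket a b ζ ξ)
        + dualBracket a b ζ (dualBracket a b ξ η) = 0) := by
  have hs := HasInvariantSymmetricPart.isInvariantSymmetric hsym
  have hA : ∀ ξ η, rPlusₗ k a b (rBracket (rPlusₗ k a b) (rMinusₗ k a b) ξ η)
      = ⁅rPlusₗ k a b ξ, rPlusₗ k a b η⁆ :=
    IsCYBESolution.rPlus_dualBracket hCYBE
  rw [dualBracket_eq_rBracket]
  refine ⟨fun c ξ ξ' η ↦ ?_, fun c ξ η η' ↦ ?_, hs.rBracket_antisymm, hs.rBracket_jacobi hA⟩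
  · rw [rBracket_add_left, rBracket_smul_left]
  · rw [rBracket_add_right, rBracket_smul_right]

/-- For a quasitriangular structure `r = Σᵢ aᵢ ⊗ bᵢ` (classical Yang–Baxter
equation plus ad-invariant symmetric part) on a finite-dimensional Lie algebra
over a field of characteristic zero, the bracket
`[ξ, η]* = ad*_{r₊(ξ)} η − ad*_{r₋(η)} ξ` is a Lie bracket on `𝔤*`: it is
bilinear, antisymmetric, and satisfies the Jacobi identity. -/
theorem dualBracket_lie {k L : Type*} [Field k] [CharZero k]
    [LieRing L] [LieAlgebra k L] [FiniteDimensional k L]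
    {m : ℕ} (a b : Fin m → L)
    (hCYBE : ∑ i, ∑ j,
        (⁅a i, a j⁆ ⊗ₜ[k] (b i ⊗ₜ[k] b j)
          + a i ⊗ₜ[k] (⁅b i, a j⁆ ⊗ₜ[k] b j)
          + a i ⊗ₜ[k] (a j ⊗ₜ[k] ⁅b i, b j⁆))
      = (0 : L ⊗[k] (L ⊗[k] L)))
    (hsym : ∀ X : L, ∑ i,
        (⁅X, a i⁆ ⊗ₜ[k] b i + a i ⊗ₜ[k] ⁅X, b i⁆
          + ⁅X, b i⁆ ⊗ₜ[k] a i + b i ⊗ₜ[k] ⁅X, a i⁆)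
      = (0 : L ⊗[k] L)) :
    (∀ (c : k) (ξ ξ' η : Module.Dual k L),
      dualBracket a b (c • ξ + ξ') η
        = c • dualBracket a b ξ η + dualBracket a b ξ' η) ∧
    (∀ (c : k) (ξ η η' : Module.Dual k L),
      dualBracket a b ξ (c • η + η')
        = c • dualBracket a b ξ η + dualBracket a b ξ η') ∧
    (∀ ξ η : Module.Dual k L, dualBracket a b ξ η = -dualBracket a b η ξ) ∧
    (∀ ξ η ζ : Module.Dual k L,
      dualBracket a b ξ (dualBracket a b η ζ)
        + dualBracket a b η (dualBracket a b ζ ξ)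
        + dualBracket a b ζ (dualBracket a b ξ η) = 0) :=
  dualBracket_lie_general a b hCYBE hsym
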